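/- Let G₁ and G₂ be real Hilbert spaces and A : G₁ → G₂ a bounded invertible operator with bounded inverse. Then A ∈ S(G₁,G₂) if and only if A⁻¹ ∈ S(G₂,G₁). -/

import Mathlib

open ContinuousLinearMap
open scoped InnerProductSpace

noncomputable section

universe u v w

/-- A bounded operator `T` between real inner product spaces is *Hilbert–Schmidt* if
`∑ᵢ ‖T eᵢ‖²` is finite for some orthonormal (Hilbert) basis `(eᵢ)`. -/
def IsHilbertSchmidt {E : Type u} {F : Type v} [NormedAddCommGroup E] [InnerProductSpace ℝ E]
    [NormedAddCommGroup F] [InnerProductSpace ℝ F] (T : E →L[ℝ] F) : Prop :=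
  ∃ (ι : Type u) (b : HilbertBasis ι ℝ E), Summable fun i => ‖T (b i)‖ ^ 2

/-- A bounded operator is invertible with a bounded inverse. -/
def IsBoundedlyInvertible {E : Type u} {F : Type v} [NormedAddCommGroup E]
    [InnerProductSpace ℝ E] [NormedAddCommGroup F] [InnerProductSpace ℝ F]
    (T : E →L[ℝ] F) : Prop :=
  ∃ S : F →L[ℝ] E, S.comp T = ContinuousLinearMap.id ℝ E ∧
    T.comp S = ContinuousLinearMap.id ℝ F

/-- `A ∈ S(G₁,G₂)`: `A` is invertible with bounded inverse and `1 - (A*A)^{1/2}` is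
Hilbert–Schmidt (`(A*A)^{1/2}` being the positive square root of `A*A`). -/
def MemS {G₁ : Type u} {G₂ : Type v}
    [NormedAddCommGroup G₁] [InnerProductSpace ℝ G₁] [CompleteSpace G₁]
    [NormedAddCommGroup G₂] [InnerProductSpace ℝ G₂] [CompleteSpace G₂]
    (A : G₁ →L[ℝ] G₂) : Prop :=
  IsBoundedlyInvertible A ∧
    ∃ S : G₁ →L[ℝ] G₁, S.IsPositive ∧
      S.comp S = (ContinuousLinearMap.adjoint A).comp A ∧
      IsHilbertSchmidt (ContinuousLinearMap.id ℝ G₁ - S)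

/-- `A ∈ S(G)`: `A` is a positive, invertible operator on `G` such that `1 - A` is
Hilbert–Schmidt. -/
def MemSG {G : Type u} [NormedAddCommGroup G] [InnerProductSpace ℝ G] [CompleteSpace G]
    (A : G →L[ℝ] G) : Prop :=
  A.IsPositive ∧ IsBoundedlyInvertible A ∧
    IsHilbertSchmidt (ContinuousLinearMap.id ℝ G - A)

/-- A family of subspaces of a real Hilbert space is mutually quasi-orthogonal if some
`A ∈ S(G)` maps them to mutually orthogonal subspaces. -/
def MutuallyQuasiOrthogonal {G : Type u} [NormedAddCommGroup G] [InnerProductSpace ℝ G]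
    [CompleteSpace G] {ι : Type w} (V : ι → Submodule ℝ G) : Prop :=
  ∃ A : G →L[ℝ] G, MemSG A ∧
    ∀ i j, i ≠ j → ∀ x ∈ V i, ∀ y ∈ V j, ⟪A x, A y⟫_ℝ = 0

/-! Polar decomposition `A = U S` with `S = (A*A)^{1/2}` and `U` unitary gives
`(B*B)^{1/2} = U S⁻¹ U* = B* S B` for `B = A⁻¹`. Directly: `B B* = (A*A)⁻¹ = S⁻²` commutes with `S`,
so `(B* S B)² = B* S (B B*) S B = B* B`, and `1 - B* S B = B* S (S - 1) B` because
`B* S² B = B* A* A B = 1`. The latter is Hilbert–Schmidt since Hilbert–Schmidt operators form a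
two-sided ideal. -/

theorem HilbertBasis.hasSum_inner_sq {ι E : Type*} [NormedAddCommGroup E]
    [InnerProductSpace ℝ E] (b : HilbertBasis ι ℝ E) (x : E) :
    HasSum (fun i => ⟪b i, x⟫_ℝ ^ 2) (‖x‖ ^ 2) := by
  simpa only [sq, real_inner_comm x, real_inner_self_eq_norm_sq] using
    b.hasSum_inner_mul_inner x x

section HilbertSchmidt

variable {E F G : Type*} [NormedAddCommGroup E] [InnerProductSpace ℝ E]
  [NormedAddCommGroup F] [InnerProductSpace ℝ F] [NormedAddCommGroup G] [InnerProductSpace ℝ G]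

/-- Both sums are the sum of `⟪c j, T (b i)⟫ ^ 2` over all pairs `(i, j)`, taken in the two
possible orders. -/
theorem summable_norm_adjoint_apply_sq [CompleteSpace E] [CompleteSpace F] {ι κ : Type*}
    (T : E →L[ℝ] F) (b : HilbertBasis ι ℝ E) (c : HilbertBasis κ ℝ F)
    (hT : Summable fun i => ‖T (b i)‖ ^ 2) : Summable fun j => ‖adjoint T (c j)‖ ^ 2 := by
  set f : ι × κ → ℝ := fun p => ⟪c p.2, T (b p.1)⟫_ℝ ^ 2
  have hf : 0 ≤ f := fun _ => sq_nonneg _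
  have hrow (i : ι) : HasSum (fun j => f (i, j)) (‖T (b i)‖ ^ 2) :=
    c.hasSum_inner_sq (T (b i))
  have hcol (j : κ) : HasSum (fun i => f (i, j)) (‖adjoint T (c j)‖ ^ 2) := by
    simpa only [f, adjoint_inner_right, real_inner_comm (c j)] using
      b.hasSum_inner_sq (adjoint T (c j))
  have hsum : Summable f :=
    (summable_prod_of_nonneg hf).2 ⟨fun i => (hrow i).summable, by
      simpa only [fun i => (hrow i).tsum_eq] using hT⟩
  simpa only [Prod.swap_prod_mk, fun j => (hcol j).tsum_eq] using
    ((summable_prod_of_nonneg fun p => hf p.swap).1 hsum.prod_symm).2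

theorem IsHilbertSchmidt.adjoint [CompleteSpace E] [CompleteSpace F] {T : E →L[ℝ] F}
    (hT : IsHilbertSchmidt T) : IsHilbertSchmidt (adjoint T) := by
  obtain ⟨ι, b, hb⟩ := hT
  obtain ⟨w, c, -⟩ := exists_hilbertBasis ℝ F
  exact ⟨w, c, summable_norm_adjoint_apply_sq T b c hb⟩

theorem IsHilbertSchmidt.comp_left {T : E →L[ℝ] F} (hT : IsHilbertSchmidt T) (L : F →L[ℝ] G) :
    IsHilbertSchmidt (L ∘L T) := by
  obtain ⟨ι, b, hb⟩ := hT
  refine ⟨ι, b, (hb.mul_left (‖L‖ ^ 2)).of_nonneg_of_le (fun _ => sq_nonneg _) fun i => ?_⟩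
  rw [← mul_pow]
  exact pow_le_pow_left₀ (norm_nonneg _) (L.le_opNorm _) 2

theorem IsHilbertSchmidt.comp_right [CompleteSpace E] [CompleteSpace F] [CompleteSpace G]
    {T : E →L[ℝ] F} (hT : IsHilbertSchmidt T) (L : G →L[ℝ] E) :
    IsHilbertSchmidt (T ∘L L) := by
  simpa only [adjoint_comp, adjoint_adjoint] using
    (hT.adjoint.comp_left (ContinuousLinearMap.adjoint L)).adjoint

end HilbertSchmidt

theorem MemS.inverse {G₁ G₂ : Type*}
    [NormedAddCommGroup G₁] [InnerProductSpace ℝ G₁] [CompleteSpace G₁]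
    [NormedAddCommGroup G₂] [InnerProductSpace ℝ G₂] [CompleteSpace G₂]
    {A : G₁ →L[ℝ] G₂} (hA : MemS A) {B : G₂ →L[ℝ] G₁}
    (hBA : B ∘L A = ContinuousLinearMap.id ℝ G₁) (hAB : A ∘L B = ContinuousLinearMap.id ℝ G₂) :
    MemS B := by
  obtain ⟨-, S, hS, hSS, hHS⟩ := hA
  have hAB_adj : adjoint B ∘L adjoint A = ContinuousLinearMap.id ℝ G₂ := by
    rw [← adjoint_comp, hAB, ← one_def, adjoint_one]
  have hBA_adj : adjoint A ∘L adjoint B = ContinuousLinearMap.id ℝ G₁ := by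
    rw [← adjoint_comp, hBA, ← one_def, adjoint_one]
  set P := B ∘L adjoint B
  have hPS : P ∘L S ∘L S = ContinuousLinearMap.id ℝ G₁ := by
    rw [hSS, comp_assoc, ← comp_assoc _ (adjoint A), hAB_adj, id_comp, hBA]
  have hSP : (S ∘L S) ∘L P = ContinuousLinearMap.id ℝ G₁ := by
    rw [hSS, comp_assoc, ← comp_assoc _ B, hAB, id_comp, hBA_adj]
  -- `S` commutes with `S ∘L S`, hence with its inverse `P`.
  have hPS_comm : P ∘L S = S ∘L P :=
    calc P ∘L S = P ∘L S ∘L (S ∘L S) ∘L P := by rw [hSP, comp_id]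
      _ = (P ∘L S ∘L S) ∘L S ∘L P := by simp only [comp_assoc]
      _ = S ∘L P := by rw [hPS, id_comp]
  have hSSB : adjoint B ∘L S ∘L S ∘L B = ContinuousLinearMap.id ℝ G₂ := by
    rw [← comp_assoc S, hSS, ← comp_assoc, ← comp_assoc, hAB_adj, id_comp, hAB]
  refine ⟨⟨A, hAB, hBA⟩, adjoint B ∘L S ∘L B, hS.adjoint_conj B, ?_, ?_⟩
  · calc (adjoint B ∘L S ∘L B) ∘L adjoint B ∘L S ∘L B = adjoint B ∘L (S ∘L P) ∘L S ∘L B := by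
          simp only [P, comp_assoc]
      _ = adjoint B ∘L (P ∘L S ∘L S) ∘L B := by rw [← hPS_comm]; simp only [comp_assoc]
      _ = adjoint B ∘L B := by rw [hPS, id_comp]
  · have h : ContinuousLinearMap.id ℝ G₂ - adjoint B ∘L S ∘L B
        = -(adjoint B ∘L S) ∘L (ContinuousLinearMap.id ℝ G₁ - S) ∘L B := by
      rw [sub_comp, id_comp, comp_sub, neg_sub]
      simp only [comp_assoc, hSSB]
    rw [h]
    exact (hHS.comp_right B).comp_left (-(adjoint B ∘L S))

theorem memS_iff_memS_inv {G₁ : Type u} {G₂ : Type v}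
    [NormedAddCommGroup G₁] [InnerProductSpace ℝ G₁] [CompleteSpace G₁]
    [NormedAddCommGroup G₂] [InnerProductSpace ℝ G₂] [CompleteSpace G₂]
    (A : G₁ →L[ℝ] G₂) (B : G₂ →L[ℝ] G₁)
    (hBA : B.comp A = ContinuousLinearMap.id ℝ G₁)
    (hAB : A.comp B = ContinuousLinearMap.id ℝ G₂) :
    MemS A ↔ MemS B :=
  ⟨fun h => h.inverse hBA hAB, fun h => h.inverse hAB hBA⟩

end
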